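/- arXiv:cs/0412120 — 3 statements merged into one kernel-verified Lean document; each statement's English description precedes it below -/
import Mathlib

section
/- Let q'(t) = (6p1 - 6p2 + 3d1 + 3d2)t^2 + (-6p1 + 6p2 - 4d1 - 2d2)t + d1. Then for every t in [0,1], |q'(t) - q'(0)| ≤ (3/2)|p1 - p2| + 2|d1 - d2| + (3/4)|d1 + d2|. -/
theorem hermite_deriv_dist_to_left (p1 p2 d1 d2 : ℝ)
    (v : ℝ → ℝ)
    (hv : ∀ t, v t = (6*p1 - 6*p2 + 3*d1 + 3*d2) * t ^ 2
        + (-6*p1 + 6*p2 - 4*d1 - 2*d2) * t + d1) :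
    ∀ t ∈ Set.Icc (0:ℝ) 1,
      |v t - v 0| ≤ 3/2 * |p1 - p2| + 2 * |d1 - d2| + 3/4 * |d1 + d2| := by
  intro t ht
  obtain ⟨h0, h1⟩ := ht
  have hq : |t ^ 2 - t| ≤ 1/4 := by
    rw [abs_le]; constructor <;> nlinarith [sq_nonneg (t - 1/2)]
  have hta : |t| ≤ 1 := by rw [abs_le]; constructor <;> linarith
  have key : v t - v 0 = (6*(p1-p2)+3*(d1+d2))*(t^2-t) - (d1-d2)*t := by
    rw [hv t, hv 0]; ring
  rw [key]
  calc |(6*(p1-p2)+3*(d1+d2))*(t^2-t) - (d1-d2)*t|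
      ≤ |(6*(p1-p2)+3*(d1+d2))*(t^2-t)| + |(d1-d2)*t| := abs_sub _ _
    _ = |6*(p1-p2)+3*(d1+d2)| * |t^2-t| + |d1-d2| * |t| := by rw [abs_mul, abs_mul]
    _ ≤ (6*|p1-p2|+3*|d1+d2|) * (1/4) + |d1-d2| * 1 := by
        apply add_le_add
        · apply mul_le_mul _ hq (abs_nonneg _) (by positivity)
          calc |6*(p1-p2)+3*(d1+d2)| ≤ |6*(p1-p2)| + |3*(d1+d2)| := abs_add_le _ _
            _ = 6*|p1-p2|+3*|d1+d2| := by rw [abs_mul, abs_mul]; norm_num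
        · exact mul_le_mul_of_nonneg_left hta (abs_nonneg _)
    _ ≤ 3/2 * |p1 - p2| + 2 * |d1 - d2| + 3/4 * |d1 + d2| := by
        nlinarith [abs_nonneg (d1-d2)]
end

section
/- Suppose |u_i^{n+1} - u_i^n| ≤ (1/2)|u_{i+1}^n - u_{i-1}^n| for all i, n, and |u_i^0 - u_{i+1}^0| ≤ ε/3^M for all i. Then for all i and all n < M, |u_i^{n+1} - u_i^n| ≤ ε/3^{M-n}. -/
theorem time_diff_bound (ε : ℝ) (hε : 0 < ε) (M : ℕ) (hM : 0 < M)
    (u : ℤ → ℕ → ℝ)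
    (hcfl : ∀ i n, |u i (n+1) - u i n| ≤ 1/2 * |u (i+1) n - u (i-1) n|)
    (h0 : ∀ i, |u i 0 - u (i+1) 0| ≤ ε / 3 ^ M) :
    ∀ i, ∀ n < M, |u i (n+1) - u i n| ≤ ε / 3 ^ (M - n) := by
  have key : ∀ n, n ≤ M → ∀ i, |u i n - u (i+1) n| ≤ ε / 3 ^ (M - n) := by
    intro n
    induction n with
    | zero => intro _ i; simpa using h0 i
    | succ n ih =>
      intro hn i
      have hn' : n ≤ M := Nat.le_of_succ_le hn
      have ihn := ih hn'
      have htd : ∀ j : ℤ, |u j (n+1) - u j n| ≤ ε / 3 ^ (M - n) := by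
        intro j
        calc |u j (n+1) - u j n| ≤ 1/2 * |u (j+1) n - u (j-1) n| := hcfl j n
          _ ≤ 1/2 * (|u (j+1) n - u j n| + |u j n - u (j-1) n|) := by
              gcongr
              exact (abs_sub_le _ _ _)
          _ ≤ 1/2 * (ε / 3 ^ (M - n) + ε / 3 ^ (M - n)) := by
              gcongr
              · rw [abs_sub_comm]; exact ihn j
              · rw [abs_sub_comm]
                have := ihn (j-1)
                simpa using this
          _ = ε / 3 ^ (M - n) := by ring
      have tri : |u i (n+1) - u (i+1) (n+1)| ≤
          |u i (n+1) - u i n| + |u i n - u (i+1) n| + |u (i+1) n - u (i+1) (n+1)| := by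
        have h1 := abs_sub_le (u i (n+1)) (u i n) (u (i+1) (n+1))
        have h2 := abs_sub_le (u i n) (u (i+1) n) (u (i+1) (n+1))
        linarith
      have h3 : |u (i+1) n - u (i+1) (n+1)| ≤ ε / 3 ^ (M - n) := by
        rw [abs_sub_comm]; exact htd (i+1)
      have hpow : (3:ℝ) ^ (M - n) = 3 * 3 ^ (M - (n+1)) := by
        have : M - n = (M - (n+1)) + 1 := by omega
        rw [this, pow_succ]; ring
      have : |u i (n+1) - u (i+1) (n+1)| ≤ 3 * (ε / 3 ^ (M - n)) := by
        have := htd i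
        have := ihn i
        linarith
      calc |u i (n+1) - u (i+1) (n+1)| ≤ 3 * (ε / 3 ^ (M - n)) := this
        _ = ε / 3 ^ (M - (n+1)) := by rw [hpow]; field_simp
  intro i n hn
  have htd : |u i (n+1) - u i n| ≤ 1/2 * |u (i+1) n - u (i-1) n| := hcfl i n
  have h1 : |u (i+1) n - u (i-1) n| ≤ |u (i+1) n - u i n| + |u i n - u (i-1) n| :=
    abs_sub_le _ _ _
  have h2 : |u (i+1) n - u i n| ≤ ε / 3 ^ (M - n) := by
    rw [abs_sub_comm]; exact key n hn.le i
  have h3 : |u i n - u (i-1) n| ≤ ε / 3 ^ (M - n) := by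
    rw [abs_sub_comm]
    have := key n hn.le (i-1)
    simpa using this
  linarith
end

section
/- Let w_j^n be a coarse-grid numerical solution and u_i^m a fine-grid numerical solution with w_j^0 = u_{jr}^0, where both satisfy the contraction |x_i^{n+1} - x_i^n| ≤ (1/2)|x_{i+1}^n - x_{i-1}^n|, M = Nr, and |u_i^0 - u_{i+1}^0| ≤ ε/3^M for all i. Then |w_j^N - u_{jr}^M| ≤ ε. -/
/-!
A scheme with `|x_i^{n+1} - x_i^n| ≤ ½ |x_{i+1}^n - x_{i-1}^n|` moves each value by at most the
largest neighbour gap, so each step at most triples the gaps: after `n` steps they are at most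
`3^n δ`, and `x_i^n` has drifted from `x_i^0` by at most `(1 + 3 + ⋯ + 3^{n-1}) δ = (3^n - 1)/2 · δ`.
The fine solution starts with gaps `δ = ε/3^M` and the coarse one with gaps `r δ`; Bernoulli's
inequality `1 + r (3^N - 1) ≤ 3^{Nr}` makes both drifts at most `ε/2`, and the two solutions
agree at time `0`.
-/

def CFLContractive (x : ℤ → ℕ → ℝ) : Prop :=
  ∀ i n, |x i (n + 1) - x i n| ≤ 1 / 2 * |x (i + 1) n - x (i - 1) n|

lemma abs_sub_add_le_mul_of_abs_sub_succ_le {f : ℤ → ℝ} {δ : ℝ}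
    (hf : ∀ i, |f i - f (i + 1)| ≤ δ) (m : ℕ) (i : ℤ) : |f i - f (i + m)| ≤ m * δ := by
  induction m with
  | zero => simp
  | succ m ih =>
    calc |f i - f (i + (m + 1 : ℕ))|
        ≤ |f i - f (i + m)| + |f (i + m) - f (i + m + 1)| := by
          push_cast; rw [← add_assoc]; exact abs_sub_le _ _ _
      _ ≤ m * δ + δ := add_le_add ih (hf _)
      _ = (m + 1 : ℕ) * δ := by push_cast; ring

namespace CFLContractive

variable {x : ℤ → ℕ → ℝ} (hx : CFLContractive x)
include hx

lemma abs_step_le {n : ℕ} {c : ℝ} (hc : ∀ i, |x i n - x (i + 1) n| ≤ c) (i : ℤ) :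
    |x i (n + 1) - x i n| ≤ c := by
  have hspread : |x (i + 1) n - x (i - 1) n| ≤ c + c :=
    calc |x (i + 1) n - x (i - 1) n|
        ≤ |x (i + 1) n - x i n| + |x i n - x (i - 1) n| := abs_sub_le _ _ _
      _ ≤ c + c := by
        refine add_le_add ?_ ?_
        · rw [abs_sub_comm]; exact hc i
        · rw [abs_sub_comm]; simpa using hc (i - 1)
  linarith [hx i n]

variable {δ : ℝ} (h0 : ∀ i, |x i 0 - x (i + 1) 0| ≤ δ)
include h0

lemma abs_sub_succ_le (n : ℕ) (i : ℤ) : |x i n - x (i + 1) n| ≤ 3 ^ n * δ := by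
  induction n generalizing i with
  | zero => simpa using h0 i
  | succ n ih =>
    have hstep := hx.abs_step_le ih
    calc |x i (n + 1) - x (i + 1) (n + 1)|
        ≤ |x i (n + 1) - x i n| + |x i n - x (i + 1) n| + |x (i + 1) n - x (i + 1) (n + 1)| := by
          linarith [abs_sub_le (x i (n + 1)) (x i n) (x (i + 1) (n + 1)),
            abs_sub_le (x i n) (x (i + 1) n) (x (i + 1) (n + 1))]
      _ ≤ 3 ^ n * δ + 3 ^ n * δ + 3 ^ n * δ := by
          gcongr
          · exact hstep i
          · exact ih i
          · rw [abs_sub_comm]; exact hstep (i + 1)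
      _ = 3 ^ (n + 1) * δ := by ring

lemma abs_sub_initial_le (n : ℕ) (i : ℤ) : |x i n - x i 0| ≤ (3 ^ n - 1) / 2 * δ := by
  induction n with
  | zero => simp
  | succ n ih =>
    calc |x i (n + 1) - x i 0|
        ≤ |x i (n + 1) - x i n| + |x i n - x i 0| := abs_sub_le _ _ _
      _ ≤ 3 ^ n * δ + (3 ^ n - 1) / 2 * δ :=
          add_le_add (hx.abs_step_le (hx.abs_sub_succ_le h0 n) i) ih
      _ = (3 ^ (n + 1) - 1) / 2 * δ := by ring

end CFLContractive

theorem coarse_fine_endpoint_bound_general (ε : ℝ) (r N M : ℕ)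
    (hM : M = N * r)
    (w u : ℤ → ℕ → ℝ)
    (hw0 : ∀ j : ℤ, w j 0 = u (j * r) 0)
    (hwcfl : ∀ j n, |w j (n+1) - w j n| ≤ 1/2 * |w (j+1) n - w (j-1) n|)
    (hucfl : ∀ i n, |u i (n+1) - u i n| ≤ 1/2 * |u (i+1) n - u (i-1) n|)
    (h0 : ∀ i, |u i 0 - u (i+1) 0| ≤ ε / 3 ^ M) :
    ∀ j : ℤ, |w j N - u (j * r) M| ≤ ε := by
  intro j
  set δ := ε / 3 ^ M
  have hδ : 0 ≤ δ := (abs_nonneg _).trans (h0 0)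
  have hw0_gap : ∀ j : ℤ, |w j 0 - w (j + 1) 0| ≤ r * δ := fun j => by
    simpa [hw0, add_mul] using abs_sub_add_le_mul_of_abs_sub_succ_le (f := (u · 0)) h0 r (j * r)
  have hw := CFLContractive.abs_sub_initial_le hwcfl hw0_gap N j
  have hu := CFLContractive.abs_sub_initial_le hucfl h0 M (j * r)
  have hbernoulli : 1 + r * ((3 : ℝ) ^ N - 1) ≤ 3 ^ M := by
    have h3N : (1 : ℝ) ≤ 3 ^ N := one_le_pow₀ (by norm_num)
    rw [hM, pow_mul]
    exact one_add_mul_sub_le_pow (by linarith) r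
  have hεδ : (3 : ℝ) ^ M * δ = ε := mul_div_cancel₀ ε (by positivity)
  calc |w j N - u (j * r) M|
      ≤ |w j N - w j 0| + |u (j * r) M - u (j * r) 0| := by
        rw [hw0 j, abs_sub_comm (u (j * r) M)]; exact abs_sub_le _ _ _
    _ ≤ ε / 2 + ε / 2 := by
        have hscaled := mul_le_mul_of_nonneg_right hbernoulli hδ
        gcongr
        · linarith
        · linarith
    _ = ε := add_halves ε

theorem coarse_fine_endpoint_bound (ε : ℝ) (hε : 0 < ε) (r N M : ℕ)
    (hr : 1 < r) (hN : 1 < N) (hM : M = N * r)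
    (w u : ℤ → ℕ → ℝ)
    (hw0 : ∀ j : ℤ, w j 0 = u (j * r) 0)
    (hwcfl : ∀ j n, |w j (n+1) - w j n| ≤ 1/2 * |w (j+1) n - w (j-1) n|)
    (hucfl : ∀ i n, |u i (n+1) - u i n| ≤ 1/2 * |u (i+1) n - u (i-1) n|)
    (h0 : ∀ i, |u i 0 - u (i+1) 0| ≤ ε / 3 ^ M) :
    ∀ j : ℤ, |w j N - u (j * r) M| ≤ ε :=
  coarse_fine_endpoint_bound_general ε r N M hM w u hw0 hwcfl hucfl h0
end
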